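/- arXiv:1403.7908 — 4 statements merged into one kernel-verified Lean document; each statement's English description precedes it below -/
import Mathlib

section
/- For a unit-speed Frenet curve α in ℝⁿ, the differential dσᵢ = √(κ_{i-1}(s)² + κᵢ(s)²) ds (the arc length element of the spherical Vᵢ-indicatrix) is invariant under direct similarities: if ᾱ = F ∘ α with F a direct similarity, then √(κ̄_{i-1}² + κ̄ᵢ²) ds̄ = √(κ_{i-1}² + κᵢ²) ds. -/
theorem Real.sqrt_div_sq_add_div_sq_mul {c : ℝ} (hc : 0 < c) (a b : ℝ) :
    √((a / c) ^ 2 + (b / c) ^ 2) * c = √(a ^ 2 + b ^ 2) := by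
  rw [div_pow, div_pow, ← add_div, Real.sqrt_div (by positivity),
    Real.sqrt_sq hc.le, div_mul_cancel₀ _ hc.ne']

theorem indicatrix_arclength_element_invariant_general (lam : ℝ) (hlam : 0 < lam)
    (κ κbar : ℕ → ℝ → ℝ)
    (hscale : ∀ j t, κbar j t = κ j (t / lam) / lam)
    (i : ℕ) :
    ∀ s, Real.sqrt ((κbar (i-1) (lam * s))^2 + (κbar i (lam * s))^2) * lam =
      Real.sqrt ((κ (i-1) s)^2 + (κ i s)^2) := by
  intro s
  rw [hscale, hscale, mul_div_cancel_left₀ s hlam.ne', Real.sqrt_div_sq_add_div_sq_mul hlam]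

/-- For a unit-speed Frenet curve α in ℝⁿ with curvatures κⱼ (κ₀ = κₙ = 0), the
arc length element `dσᵢ = √(κ_{i-1}² + κᵢ²) ds` of the spherical Vᵢ-indicatrix is invariant
under direct similarities: for `ᾱ = F ∘ α` (with curvatures `κ̄ⱼ(s̄) = κⱼ(s)/λ` and arc length
`s̄ = λ s`, so `ds̄ = λ ds`), one has `√(κ̄_{i-1}(s̄)² + κ̄ᵢ(s̄)²) · λ = √(κ_{i-1}(s)² + κᵢ(s)²)`. -/
theorem indicatrix_arclength_element_invariant {n : ℕ} (lam : ℝ) (hlam : 0 < lam)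
    (κ κbar : ℕ → ℝ → ℝ)
    (hκ0 : ∀ s, κ 0 s = 0) (hκn : ∀ s, κ n s = 0)
    (hscale : ∀ j t, κbar j t = κ j (t / lam) / lam)
    (i : ℕ) (hi : 1 ≤ i) (hin : i ≤ n) :
    ∀ s, Real.sqrt ((κbar (i-1) (lam * s))^2 + (κbar i (lam * s))^2) * lam =
      Real.sqrt ((κ (i-1) s)^2 + (κ i s)^2) :=
  indicatrix_arclength_element_invariant_general lam hlam κ κbar hscale i
end

section
/- For a unit-speed Frenet curve α in ℝⁿ with spherical Vᵢ-indicatrix arc length σᵢ (dσᵢ/ds = √(κ_{i-1}² + κᵢ²)), the shape curvatures κ̃(σᵢ) = -(d/dσᵢ) log √(κ_{i-1}² + κᵢ²) and κ̃ⱼ(σᵢ) = κⱼ/√(κ_{i-1}² + κᵢ²), j = 1,…,n-1, are invariant under direct similarities: the corresponding functions for ᾱ = F ∘ α coincide with those of α at corresponding parameter values. -/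
/-!
Under a similarity of ratio `λ` every curvature function transforms as `f ↦ f (· / λ) / λ`, and so
does `q = √(κ_{i-1}² + κᵢ²)`. Both shape curvatures are homogeneous of degree zero in this
rescaling: a quotient of two rescaled functions is unchanged, and `-q' / q²` is unchanged because
the chain rule contributes exactly one more factor `1 / λ` to `q'`.
-/

/-- How a curvature function transforms under a similarity of ratio `λ` (arc length `s̄ = λ s`). -/
noncomputable def rescale (lam : ℝ) (f : ℝ → ℝ) (t : ℝ) : ℝ := f (t / lam) / lam

section Rescale

variable {lam : ℝ} (f g : ℝ → ℝ) (s : ℝ)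

theorem rescale_mul_apply (hlam : lam ≠ 0) : rescale lam f (lam * s) = f s / lam := by
  rw [rescale, mul_div_cancel_left₀ s hlam]

theorem deriv_rescale_mul (hlam : lam ≠ 0) :
    deriv (rescale lam f) (lam * s) = deriv f s / lam ^ 2 := by
  have hcomp : (fun t => f (t / lam)) = (f <| lam⁻¹ * ·) := by
    funext t
    rw [div_eq_inv_mul]
  calc deriv (rescale lam f) (lam * s)
      = deriv (f <| lam⁻¹ * ·) (lam * s) / lam := by
        rw [← hcomp]
        exact deriv_div_const _
    _ = deriv f s / lam ^ 2 := by
        rw [deriv_comp_mul_left, inv_mul_cancel_left₀ hlam, smul_eq_mul]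
        field_simp

theorem sqrt_sq_add_sq_rescale (hlam : 0 ≤ lam) (t : ℝ) :
    √(rescale lam f t ^ 2 + rescale lam g t ^ 2) =
      rescale lam (fun t => √(f t ^ 2 + g t ^ 2)) t := by
  simp only [rescale, div_pow, ← add_div]
  rw [Real.sqrt_div' _ (sq_nonneg lam), Real.sqrt_sq hlam]

theorem rescale_div_rescale_mul (hlam : lam ≠ 0) :
    rescale lam f (lam * s) / rescale lam g (lam * s) = f s / g s := by
  rw [rescale_mul_apply f s hlam, rescale_mul_apply g s hlam, div_div_div_cancel_right₀ hlam]

theorem neg_deriv_div_sq_rescale_mul (hlam : lam ≠ 0) :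
    -deriv (rescale lam f) (lam * s) / rescale lam f (lam * s) ^ 2 = -deriv f s / f s ^ 2 := by
  rw [deriv_rescale_mul f s hlam, rescale_mul_apply f s hlam, div_pow, neg_div,
    div_div_div_cancel_right₀ (pow_ne_zero 2 hlam), neg_div]

end Rescale

theorem shape_curvatures_invariant_general {n : ℕ} (lam : ℝ) (hlam : 0 < lam)
    (κ κbar : ℕ → ℝ → ℝ)
    (hscale : ∀ j t, κbar j t = κ j (t / lam) / lam)
    (i : ℕ) :
    (∀ s,
      -(deriv (fun t => Real.sqrt ((κbar (i-1) t)^2 + (κbar i t)^2)) (lam * s)) /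
          (Real.sqrt ((κbar (i-1) (lam * s))^2 + (κbar i (lam * s))^2))^2 =
        -(deriv (fun t => Real.sqrt ((κ (i-1) t)^2 + (κ i t)^2)) s) /
          (Real.sqrt ((κ (i-1) s)^2 + (κ i s)^2))^2) ∧
    (∀ j, 1 ≤ j → j ≤ n - 1 → ∀ s,
      κbar j (lam * s) / Real.sqrt ((κbar (i-1) (lam * s))^2 + (κbar i (lam * s))^2) =
        κ j s / Real.sqrt ((κ (i-1) s)^2 + (κ i s)^2)) := by
  have hκbar : ∀ j, κbar j = rescale lam (κ j) := fun j => funext (hscale j)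
  set q : ℝ → ℝ := fun t => √(κ (i-1) t ^ 2 + κ i t ^ 2)
  have hqbar : ∀ t, √(κbar (i-1) t ^ 2 + κbar i t ^ 2) = rescale lam q t := by
    intro t
    rw [hκbar, hκbar]
    exact sqrt_sq_add_sq_rescale _ _ hlam.le t
  simp only [hqbar]
  exact ⟨fun s => neg_deriv_div_sq_rescale_mul q s hlam.ne',
    fun j _ _ s => by rw [hκbar]; exact rescale_div_rescale_mul _ q s hlam.ne'⟩

/-- The shape curvatures
`κ̃ = -(d/dσᵢ) log √(κ_{i-1}² + κᵢ²)` (equivalently, writing `q = √(κ_{i-1}² + κᵢ²)` and using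
`d/dσᵢ = (1/q) d/ds`, `κ̃(s) = -(q'(s))/(q(s))²`) and `κ̃ⱼ = κⱼ/√(κ_{i-1}² + κᵢ²)`
are invariant under direct similarities: the corresponding functions for `ᾱ = F ∘ α`
(whose curvatures satisfy `κ̄ⱼ(s̄) = κⱼ(s)/λ` with `s̄ = λ s`) coincide with those of α
at corresponding parameter values. -/
theorem shape_curvatures_invariant {n : ℕ} (lam : ℝ) (hlam : 0 < lam)
    (κ κbar : ℕ → ℝ → ℝ)
    (hκ0 : ∀ s, κ 0 s = 0) (hκn : ∀ s, κ n s = 0)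
    (hdiff : ∀ j, Differentiable ℝ (κ j))
    (hscale : ∀ j t, κbar j t = κ j (t / lam) / lam)
    (i : ℕ) (hi : 1 ≤ i) (hin : i ≤ n)
    (hq : ∀ s, 0 < (κ (i-1) s)^2 + (κ i s)^2) :
    (∀ s,
      -(deriv (fun t => Real.sqrt ((κbar (i-1) t)^2 + (κbar i t)^2)) (lam * s)) /
          (Real.sqrt ((κbar (i-1) (lam * s))^2 + (κbar i (lam * s))^2))^2 =
        -(deriv (fun t => Real.sqrt ((κ (i-1) t)^2 + (κ i t)^2)) s) /
          (Real.sqrt ((κ (i-1) s)^2 + (κ i s)^2))^2) ∧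
    (∀ j, 1 ≤ j → j ≤ n - 1 → ∀ s,
      κbar j (lam * s) / Real.sqrt ((κbar (i-1) (lam * s))^2 + (κbar i (lam * s))^2) =
        κ j s / Real.sqrt ((κ (i-1) s)^2 + (κ i s)^2)) :=
  shape_curvatures_invariant_general lam hlam κ κbar hscale i
end

section
/- Let α be a unit-speed Frenet curve in ℝ³ with κ₁ > 0 and shape curvatures κ̃₁ = (1/κ₁)' (derivative with respect to arc length s) and κ̃₂ = κ₂/κ₁. If the evolute coefficients are m₁(s) = 1/κ₁(s) and m₂(s) = (1/κ₁(s)) cot(∫ κ₂(s) ds), then κ̃₁ = m₁' and κ̃₂ = m₁ (m₁' m₂ - m₁ m₂') / (m₁² + m₂²). -/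
/-!
Write `m₂ = m₁ g` with `g = cot ∘ K`. Since `(m₁, m₂) = (m₁ / sin K) (sin K, cos K)`, its polar
angle is `π/2 - K` modulo `π`, and `(m₁' m₂ - m₁ m₂') / (m₁² + m₂²)` is minus the rate of change
of that angle, i.e. `K' = κ₂`; multiplying by `m₁ = 1/κ₁` gives `κ₂/κ₁`. In the computation this
is `g' = -(1 + g²) K'`, after which the terms in `m₁'` cancel.
-/

theorem HasDerivAt.cos_div_sin {K : ℝ → ℝ} {k s : ℝ} (hK : HasDerivAt K k s)
    (hs : Real.sin (K s) ≠ 0) :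
    HasDerivAt (fun t => Real.cos (K t) / Real.sin (K t))
      (-(1 + (Real.cos (K s) / Real.sin (K s)) ^ 2) * k) s := by
  refine (hK.cos.div hK.sin hs).congr_deriv ?_
  field_simp
  ring

theorem mul_wronskian_div_sq_add_sq_eq {f g : ℝ → ℝ} {f' k s : ℝ} (hf : HasDerivAt f f' s)
    (hg : HasDerivAt g (-(1 + g s ^ 2) * k) s) (hf0 : f s ≠ 0) :
    f s * (f' * (f s * g s) - f s * deriv (fun t => f t * g t) s) /
      (f s ^ 2 + (f s * g s) ^ 2) = f s * k := by
  rw [deriv_fun_mul hf.differentiableAt hg.differentiableAt, hf.deriv, hg.deriv]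
  have : 1 + g s ^ 2 ≠ 0 := by positivity
  field_simp
  ring

/-- Here `K` is an antiderivative of `κ₂` (so `∫ κ₂ ds = K`). -/
theorem shape_curvatures_from_evolute_general
    (κ₁ κ₂ K : ℝ → ℝ)
    (hκ₁pos : ∀ s, 0 < κ₁ s)
    (hκ₁diff : Differentiable ℝ κ₁)
    (hK : ∀ s, HasDerivAt K (κ₂ s) s)
    (hsin : ∀ s, Real.sin (K s) ≠ 0)
    (m₁ m₂ : ℝ → ℝ)
    (hm₁ : m₁ = fun s => 1 / κ₁ s)
    (hm₂ : m₂ = fun s => (1 / κ₁ s) * (Real.cos (K s) / Real.sin (K s))) :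
    (∀ s, deriv (fun t => 1 / κ₁ t) s = deriv m₁ s) ∧
    (∀ s, κ₂ s / κ₁ s =
      m₁ s * (deriv m₁ s * m₂ s - m₁ s * deriv m₂ s) / ((m₁ s)^2 + (m₂ s)^2)) := by
  refine ⟨fun s => by rw [hm₁], fun s => ?_⟩
  have hm₂_eq : m₂ = fun t => m₁ t * (Real.cos (K t) / Real.sin (K t)) := by rw [hm₂, hm₁]
  have hκ₁s : κ₁ s ≠ 0 := (hκ₁pos s).ne'
  have hm₁_deriv : HasDerivAt m₁ (deriv m₁ s) s := by
    rw [hm₁]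
    exact ((differentiableAt_const 1).div (hκ₁diff s) hκ₁s).hasDerivAt
  rw [hm₂_eq, mul_wronskian_div_sq_add_sq_eq hm₁_deriv ((hK s).cos_div_sin (hsin s))
    (by simp [hm₁, hκ₁s]), hm₁]
  field_simp

/-- For a unit-speed Frenet curve in ℝ³ with κ₁ > 0 and evolute coefficients
`m₁ = 1/κ₁`, `m₂ = (1/κ₁) cot(∫ κ₂ ds)`, the shape curvatures `κ̃₁ = (1/κ₁)'`, `κ̃₂ = κ₂/κ₁`
satisfy `κ̃₁ = m₁'` and `κ̃₂ = m₁ (m₁' m₂ - m₁ m₂') / (m₁² + m₂²)`. Here `K` is an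
antiderivative of κ₂ (so `∫ κ₂ ds = K`). -/
theorem shape_curvatures_from_evolute
    (κ₁ κ₂ K : ℝ → ℝ)
    (hκ₁pos : ∀ s, 0 < κ₁ s)
    (hκ₂ne : ∀ s, κ₂ s ≠ 0)
    (hκ₁diff : Differentiable ℝ κ₁)
    (hK : ∀ s, HasDerivAt K (κ₂ s) s)
    (hsin : ∀ s, Real.sin (K s) ≠ 0)
    (m₁ m₂ : ℝ → ℝ)
    (hm₁ : m₁ = fun s => 1 / κ₁ s)
    (hm₂ : m₂ = fun s => (1 / κ₁ s) * (Real.cos (K s) / Real.sin (K s))) :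
    (∀ s, deriv (fun t => 1 / κ₁ t) s = deriv m₁ s) ∧
    (∀ s, κ₂ s / κ₁ s =
      m₁ s * (deriv m₁ s * m₂ s - m₁ s * deriv m₂ s) / ((m₁ s)^2 + (m₂ s)^2)) :=
  shape_curvatures_from_evolute_general κ₁ κ₂ K hκ₁pos hκ₁diff hK hsin m₁ m₂ hm₁ hm₂
end

section
/- Let α be a unit-speed curve in ℝ³ with κ₁ > 0, κ₂ ≠ 0, reparametrized by the arc length σ₂ of its principal normal indicatrix (dσ₂/ds = √(κ₁² + κ₂²)), with shape curvatures κ̃₁ = κ₁/√(κ₁² + κ₂²) and κ̃₂ = κ₂/√(κ₁² + κ₂²). Then the geodesic curvature of the principal normal indicatrix equals κ̃₁² · d(κ̃₂/κ̃₁)/dσ₂, i.e. equals (κ₁² / (κ₁² + κ₂²)) · d(κ₂/κ₁)/dσ₂. -/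
/-- Cross product on Euclidean 3-space. -/
noncomputable def cross3 (u v : EuclideanSpace ℝ (Fin 3)) : EuclideanSpace ℝ (Fin 3) :=
  (WithLp.equiv 2 (Fin 3 → ℝ)).symm
    (crossProduct ((WithLp.equiv 2 (Fin 3 → ℝ)) u) ((WithLp.equiv 2 (Fin 3 → ℝ)) v))

/-- Scalar triple product (determinant of the three vectors as rows). -/
noncomputable def det3 (u v w : EuclideanSpace ℝ (Fin 3)) : ℝ :=
  Matrix.det (Matrix.of ![(WithLp.equiv 2 (Fin 3 → ℝ)) u,
    (WithLp.equiv 2 (Fin 3 → ℝ)) v, (WithLp.equiv 2 (Fin 3 → ℝ)) w])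

/-!
Put `R = √(κ₁² + κ₂²)` and `κ̃ᵢ = κᵢ / R`. Along `σ₂` the Frenet equations give
`γ' = -κ̃₁ V₁ + κ̃₂ V₃` and `γ'' = -κ̃₁' V₁ + y V₂ + κ̃₂' V₃` for some `y`. In the positively
oriented orthonormal frame `(V₁, V₂, V₃)` the triple product `det(γ, γ', γ'')` is therefore the
Wronskian `κ̃₁ κ̃₂' - κ̃₂ κ̃₁' = κ̃₁² (κ̃₂ / κ̃₁)'`, and `κ̃₂ / κ̃₁ = κ₂ / κ₁`.
-/

open Real

local notation "𝔼³" => EuclideanSpace ℝ (Fin 3)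

theorem det3_smul_add_cross3 {e₁ e₂ : 𝔼³} (h₁ : ‖e₁‖ = 1) (h₂ : ‖e₂‖ = 1)
    (h₁₂ : inner ℝ e₁ e₂ = 0) (a c x y z : ℝ) :
    det3 e₂ (a • e₁ + c • cross3 e₁ e₂) (x • e₁ + y • e₂ + z • cross3 e₁ e₂) =
      c * x - a * z := by
  have sum_sq {e : 𝔼³} (h : ‖e‖ = 1) : e 0 * e 0 + e 1 * e 1 + e 2 * e 2 = 1 := by
    have := real_inner_self_eq_norm_sq e
    rw [h, PiLp.inner_apply] at this
    simpa [Fin.sum_univ_three, sq] using this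
  have h₁₂' : e₁ 0 * e₂ 0 + e₁ 1 * e₂ 1 + e₁ 2 * e₂ 2 = 0 := by
    simpa [PiLp.inner_apply, Fin.sum_univ_three, mul_comm] using h₁₂
  simp only [det3, cross3, Matrix.det_fin_three, Matrix.of_apply, Matrix.cons_val', cross_apply,
    WithLp.equiv_apply, WithLp.equiv_symm_apply, PiLp.add_apply, PiLp.smul_apply, smul_eq_mul,
    Matrix.cons_val_zero, Matrix.cons_val_one, Matrix.cons_val, Matrix.cons_val_fin_one, Fin.isValue]
  -- the determinant is `(c x - a z) |e₁ × e₂|²`, and Lagrange's identity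
  -- `|e₁ × e₂|² = |e₁|² |e₂|² - ⟪e₁, e₂⟫²` makes the last factor `1`
  linear_combination (c * x - a * z) *
    ((e₂ 0 * e₂ 0 + e₂ 1 * e₂ 1 + e₂ 2 * e₂ 2) * sum_sq h₁ + sum_sq h₂ -
      (e₁ 0 * e₂ 0 + e₁ 1 * e₂ 1 + e₁ 2 * e₂ 2) * h₁₂')

theorem sq_mul_deriv_div {f g : ℝ → ℝ} {x : ℝ} (hf : DifferentiableAt ℝ f x)
    (hg : DifferentiableAt ℝ g x) (hx : f x ≠ 0) :
    f x ^ 2 * deriv (fun y => g y / f y) x = f x * deriv g x - g x * deriv f x := by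
  rw [deriv_fun_div hg hf hx]
  field_simp

theorem det3_deriv_deriv_eq_wronskian {γ e₁ e₂ e₃ : ℝ → 𝔼³} {p q : ℝ → ℝ} {u a b : ℝ}
    (h₁ : ‖e₁ u‖ = 1) (h₂ : ‖e₂ u‖ = 1) (h₁₂ : inner ℝ (e₁ u) (e₂ u) = 0)
    (h₃ : e₃ u = cross3 (e₁ u) (e₂ u)) (hγu : γ u = e₂ u)
    (hγ : ∀ w, HasDerivAt γ ((-p w) • e₁ w + q w • e₃ w) w)
    (hp : DifferentiableAt ℝ p u) (hq : DifferentiableAt ℝ q u)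
    (he₁ : HasDerivAt e₁ (a • e₂ u) u) (he₃ : HasDerivAt e₃ (b • e₂ u) u) :
    det3 (γ u) (deriv γ u) (deriv (deriv γ) u) = p u * deriv q u - q u * deriv p u := by
  have hγ' : deriv γ = fun w => (-p w) • e₁ w + q w • e₃ w := funext fun w => (hγ w).deriv
  have hγ'' : deriv (deriv γ) u =
      (-deriv p u) • e₁ u + (q u * b - p u * a) • e₂ u + deriv q u • e₃ u := by
    rw [hγ']
    exact (((hp.hasDerivAt.neg.smul he₁).add (hq.hasDerivAt.smul he₃)).congr_deriv
      (by simp only [Pi.neg_apply]; module)).deriv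
  rw [hγ'', hγ']
  beta_reduce
  rw [hγu, h₃, det3_smul_add_cross3 h₁ h₂ h₁₂]
  ring

-- `shapeCurvature κ₁ κ₂ κᵢ` is the shape curvature `κ̃ᵢ`.
noncomputable def shapeCurvature (κ₁ κ₂ κ : ℝ → ℝ) (s : ℝ) : ℝ :=
  κ s / √(κ₁ s ^ 2 + κ₂ s ^ 2)

section ShapeCurvature

variable {κ₁ κ₂ : ℝ → ℝ} {s : ℝ}

theorem shapeCurvature_sq (κ : ℝ → ℝ) :
    shapeCurvature κ₁ κ₂ κ s ^ 2 = κ s ^ 2 / (κ₁ s ^ 2 + κ₂ s ^ 2) := by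
  rw [shapeCurvature, div_pow, sq_sqrt (by positivity)]

theorem shapeCurvature_div_shapeCurvature (hs : κ₁ s ^ 2 + κ₂ s ^ 2 ≠ 0) (κ κ' : ℝ → ℝ) :
    shapeCurvature κ₁ κ₂ κ s / shapeCurvature κ₁ κ₂ κ' s = κ s / κ' s :=
  div_div_div_cancel_right₀ ((sqrt_ne_zero (by positivity)).2 hs) _ _

theorem DifferentiableAt.shapeCurvature {κ : ℝ → ℝ} (hκ₁ : DifferentiableAt ℝ κ₁ s)
    (hκ₂ : DifferentiableAt ℝ κ₂ s) (hκ : DifferentiableAt ℝ κ s)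
    (hs : κ₁ s ^ 2 + κ₂ s ^ 2 ≠ 0) :
    DifferentiableAt ℝ (shapeCurvature κ₁ κ₂ κ) s :=
  hκ.div (((hκ₁.pow 2).add (hκ₂.pow 2)).sqrt hs) ((sqrt_ne_zero (by positivity)).2 hs)

end ShapeCurvature

theorem geodesic_curvature_normal_indicatrix_general
    (V₁ V₂ V₃ : ℝ → EuclideanSpace ℝ (Fin 3)) (κ₁ κ₂ : ℝ → ℝ)
    (hκ₁pos : ∀ s, 0 < κ₁ s)
    (hκ₁diff : Differentiable ℝ κ₁) (hκ₂diff : Differentiable ℝ κ₂)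
    (hfrenet1 : ∀ s, HasDerivAt V₁ (κ₁ s • V₂ s) s)
    (hfrenet2 : ∀ s, HasDerivAt V₂ ((-(κ₁ s)) • V₁ s + κ₂ s • V₃ s) s)
    (hfrenet3 : ∀ s, HasDerivAt V₃ ((-(κ₂ s)) • V₂ s) s)
    (hV₁unit : ∀ s, ‖V₁ s‖ = 1) (hV₂unit : ∀ s, ‖V₂ s‖ = 1)
    (horth : ∀ s, (inner ℝ (V₁ s) (V₂ s) : ℝ) = 0)
    (hV₃ : ∀ s, V₃ s = cross3 (V₁ s) (V₂ s))
    -- σ₂ is the arc length of the principal normal indicatrix and τ its inverse :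
    (τ : ℝ → ℝ)
    (hτ : ∀ u, HasDerivAt τ (1 / Real.sqrt ((κ₁ (τ u))^2 + (κ₂ (τ u))^2)) u)
    (γ : ℝ → EuclideanSpace ℝ (Fin 3)) (hγ : γ = V₂ ∘ τ) :
    ∀ u, det3 (γ u) (deriv γ u) (deriv (deriv γ) u) =
      ((κ₁ (τ u))^2 / ((κ₁ (τ u))^2 + (κ₂ (τ u))^2)) *
        deriv (fun w => κ₂ (τ w) / κ₁ (τ w)) u := by
  intro u
  subst hγ
  have hsum_sq_ne : ∀ s, κ₁ s ^ 2 + κ₂ s ^ 2 ≠ 0 := fun s => by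
    have := hκ₁pos s
    positivity
  have hshape {κ : ℝ → ℝ} (hκ : Differentiable ℝ κ) :
      DifferentiableAt ℝ (shapeCurvature κ₁ κ₂ κ ∘ τ) u :=
    ((hκ₁diff _).shapeCurvature (hκ₂diff _) (hκ _) (hsum_sq_ne _)).comp u (hτ u).differentiableAt
  have hγ' : ∀ w, HasDerivAt (V₂ ∘ τ) ((-(shapeCurvature κ₁ κ₂ κ₁ ∘ τ) w) • (V₁ ∘ τ) w +
      (shapeCurvature κ₁ κ₂ κ₂ ∘ τ) w • (V₃ ∘ τ) w) w := fun w =>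
    ((hfrenet2 (τ w)).scomp w (hτ w)).congr_deriv
      (by simp only [shapeCurvature, Function.comp_apply]; module)
  have hV₁' := (hfrenet1 (τ u)).scomp u (hτ u)
  have hV₃' := (hfrenet3 (τ u)).scomp u (hτ u)
  rw [smul_smul] at hV₁' hV₃'
  have hshape₁_ne : (shapeCurvature κ₁ κ₂ κ₁ ∘ τ) u ≠ 0 :=
    div_ne_zero (hκ₁pos _).ne' ((sqrt_ne_zero (by positivity)).2 (hsum_sq_ne _))
  rw [det3_deriv_deriv_eq_wronskian (u := u) (e₁ := V₁ ∘ τ) (e₂ := V₂ ∘ τ) (e₃ := V₃ ∘ τ)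
      (hV₁unit (τ u)) (hV₂unit (τ u)) (horth (τ u)) (hV₃ (τ u)) rfl hγ' (hshape hκ₁diff)
      (hshape hκ₂diff) hV₁' hV₃',
    ← sq_mul_deriv_div (hshape hκ₁diff) (hshape hκ₂diff) hshape₁_ne, Function.comp_apply,
    shapeCurvature_sq]
  simp only [Function.comp_apply, shapeCurvature_div_shapeCurvature (hsum_sq_ne _)]

/-- For a unit-speed Frenet curve in ℝ³ with κ₁ > 0, κ₂ ≠ 0, the geodesic
curvature of its principal normal indicatrix `γ = V₂` (parametrized by its arc length σ₂,
`dσ₂/ds = √(κ₁² + κ₂²)`, with inverse reparametrization τ) equals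
`κ̃₁² · d(κ̃₂/κ̃₁)/dσ₂ = (κ₁²/(κ₁² + κ₂²)) · d(κ₂/κ₁)/dσ₂`. -/
theorem geodesic_curvature_normal_indicatrix
    (α V₁ V₂ V₃ : ℝ → EuclideanSpace ℝ (Fin 3)) (κ₁ κ₂ : ℝ → ℝ)
    (hκ₁pos : ∀ s, 0 < κ₁ s) (hκ₂ne : ∀ s, κ₂ s ≠ 0)
    (hκ₁diff : Differentiable ℝ κ₁) (hκ₂diff : Differentiable ℝ κ₂)
    (htangent : ∀ s, HasDerivAt α (V₁ s) s)
    (hfrenet1 : ∀ s, HasDerivAt V₁ (κ₁ s • V₂ s) s)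
    (hfrenet2 : ∀ s, HasDerivAt V₂ ((-(κ₁ s)) • V₁ s + κ₂ s • V₃ s) s)
    (hfrenet3 : ∀ s, HasDerivAt V₃ ((-(κ₂ s)) • V₂ s) s)
    (hV₁unit : ∀ s, ‖V₁ s‖ = 1) (hV₂unit : ∀ s, ‖V₂ s‖ = 1)
    (horth : ∀ s, (inner ℝ (V₁ s) (V₂ s) : ℝ) = 0)
    (hV₃ : ∀ s, V₃ s = cross3 (V₁ s) (V₂ s))
    -- σ₂ is the arc length of the principal normal indicatrix and τ its inverse :
    (σ₂ τ : ℝ → ℝ)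
    (hσ₂ : ∀ s, HasDerivAt σ₂ (Real.sqrt ((κ₁ s)^2 + (κ₂ s)^2)) s)
    (hinv : Function.LeftInverse τ σ₂ ∧ Function.RightInverse τ σ₂)
    (hτ : ∀ u, HasDerivAt τ (1 / Real.sqrt ((κ₁ (τ u))^2 + (κ₂ (τ u))^2)) u)
    (γ : ℝ → EuclideanSpace ℝ (Fin 3)) (hγ : γ = V₂ ∘ τ) :
    ∀ u, det3 (γ u) (deriv γ u) (deriv (deriv γ) u) =
      ((κ₁ (τ u))^2 / ((κ₁ (τ u))^2 + (κ₂ (τ u))^2)) *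
        deriv (fun w => κ₂ (τ w) / κ₁ (τ w)) u :=
  geodesic_curvature_normal_indicatrix_general V₁ V₂ V₃ κ₁ κ₂ hκ₁pos hκ₁diff hκ₂diff hfrenet1
    hfrenet2 hfrenet3 hV₁unit hV₂unit horth hV₃ τ hτ γ hγ
end
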